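/- arXiv:1802.06118 — 3 statements merged into one kernel-verified Lean document; each statement's English description precedes it below -/
import Mathlib

section
/- Let r : [τ̲, τ̄] → ℝ² be a C³ plane curve satisfying the standard setup. Then for all sufficiently small Δ > 0 there exist values k(Δ) ≤ K(Δ) such that the side [p_i^Δ, p_{i+1}^Δ] of the approximating polygon P^Δ carries an equilibrium point with respect to the origin if and only if k(Δ) ≤ i ≤ K(Δ); in particular the set of indices of sides carrying equilibrium points is an interval, and consequently r admits no irregular equilibrium sequence, i.e. no sequence of equilibrium points p_{i_k}^{Δ_k} of P^{Δ_k} with Δ_k → 0 and |i_k| → ∞. -/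
/-!
Write `D(t) = ⟨r(t), ṙ(t)⟩ = ½ (|r|²)'(t)` and `F_θ(b) = ⟨r(b), r(b + θ) − r(b)⟩`. The side from
`a` to `a + Δ` carries an equilibrium iff `F_Δ(a) < 0` and `F_{−Δ}(a + Δ) < 0`. Taylor's formula
gives `F_θ = θ D + O(θ²)` and `F_θ' = θ D' + O(θ²)` uniformly on the parameter interval.
`D` vanishes only at `0`, where `D'(0) = ẋ(0)² (1 + κρ) ≠ 0`; so, with `σ = sign D'(0)`, `σ D`
grows at least linearly away from `0` and `σ D' > 0` near `0`. Hence for small `Δ` and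
`θ = ±Δ` the function `θ σ F_θ` is negative to the left of a fixed neighbourhood of `0`, positive
to the right of it and increasing inside it. Its sign is therefore monotone, which makes the
carrying sides consecutive; and a carrying side forces `D(a) = O(Δ)`, i.e. `a = O(Δ)`, so the
indices of polygonal equilibria stay bounded.
-/

open Set Filter MeasureTheory
open scoped ENNReal Topology

noncomputable section

/-- The dot product of two plane vectors. -/
def dot2 (p q : ℝ × ℝ) : ℝ := p.1 * q.1 + p.2 * q.2

/-- The Euclidean norm of a plane vector. -/
def enorm2 (p : ℝ × ℝ) : ℝ := Real.sqrt (dot2 p p)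

/-- `τ` is an equilibrium parameter of the curve `r` with respect to the point `q`:
the normal line of `r` at `r τ` passes through `q`, i.e. `⟨ṙ(τ), r(τ) − q⟩ = 0`. -/
def IsEquilib (r : ℝ → ℝ × ℝ) (q : ℝ × ℝ) (τ : ℝ) : Prop :=
  dot2 (deriv r τ) (r τ - q) = 0

/-- The signed curvature of a parametrized plane curve. -/
def curv (r : ℝ → ℝ × ℝ) (τ : ℝ) : ℝ :=
  ((deriv r τ).1 * (deriv (deriv r) τ).2 - (deriv r τ).2 * (deriv (deriv r) τ).1) /
    enorm2 (deriv r τ) ^ 3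

/-- The side `[p, q]` of an approximating polygon carries a (stable) equilibrium point
with respect to the origin: `⟨p, q − p⟩ < 0 < ⟨q, q − p⟩`. -/
def SideCarries (p q : ℝ × ℝ) : Prop :=
  dot2 p (q - p) < 0 ∧ 0 < dot2 q (q - p)

/-- The vertex `p` (with neighbouring vertices `pPrev`, `pNext`) carries an (unstable)
equilibrium point with respect to the origin. -/
def VertexCarries (pPrev p pNext : ℝ × ℝ) : Prop :=
  0 < dot2 p (p - pPrev) ∧ 0 < dot2 p (p - pNext)

theorem ContDiff.hasDerivAt_iterate_deriv {𝕜 E : Type*} [NontriviallyNormedField 𝕜]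
    [NormedAddCommGroup E] [NormedSpace 𝕜 E] {f : 𝕜 → E} {n k : ℕ} (hf : ContDiff 𝕜 n f)
    (hk : k < n) (t : 𝕜) : HasDerivAt (deriv^[k] f) (deriv^[k + 1] f t) t := by
  rw [← iteratedDeriv_eq_iterate, ← iteratedDeriv_eq_iterate, iteratedDeriv_succ]
  exact (hf.differentiable_iteratedDeriv k (mod_cast hk) t).hasDerivAt

theorem ContDiff.exists_bound_iterate_deriv {𝕜 E : Type*} [NontriviallyNormedField 𝕜]
    [NormedAddCommGroup E] [NormedSpace 𝕜 E] {f : 𝕜 → E} {n : ℕ} (hf : ContDiff 𝕜 n f)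
    {s : Set 𝕜} (hs : IsCompact s) : ∃ B, ∀ k ≤ n, ∀ t ∈ s, ‖deriv^[k] f t‖ ≤ B := by
  have hcont : Continuous fun t (k : Fin (n + 1)) => deriv^[k] f t := by
    refine continuous_pi fun k => ?_
    simpa only [iteratedDeriv_eq_iterate] using
      hf.continuous_iteratedDeriv k (mod_cast Nat.lt_succ_iff.mp k.is_lt)
  obtain ⟨B, hB⟩ := hs.exists_bound_of_continuousOn hcont.continuousOn
  exact ⟨B, fun k hk t ht =>
    (norm_le_pi_norm (fun j : Fin (n + 1) => deriv^[j] f t) ⟨k, Nat.lt_succ_of_le hk⟩).trans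
      (hB t ht)⟩

theorem norm_sub_sub_smul_le_of_norm_deriv_le {E : Type*} [NormedAddCommGroup E]
    [NormedSpace ℝ E] {f f' f'' : ℝ → E} {s : Set ℝ} {B x y : ℝ} (hs : Convex ℝ s)
    (hf : ∀ t, HasDerivAt f (f' t) t) (hf' : ∀ t, HasDerivAt f' (f'' t) t)
    (hB : ∀ t ∈ s, ‖f'' t‖ ≤ B) (hx : x ∈ s) (hy : y ∈ s) :
    ‖f y - f x - (y - x) • f' x‖ ≤ B * (y - x) ^ 2 := by
  have hB0 : 0 ≤ B := (norm_nonneg _).trans (hB x hx)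
  have hxy : uIcc x y ⊆ s := hs.ordConnected.uIcc_subset hx hy
  have hlip : ∀ t ∈ uIcc x y, ‖f' t - f' x‖ ≤ B * |y - x| := fun t ht => calc
    ‖f' t - f' x‖ ≤ B * ‖t - x‖ := hs.norm_image_sub_le_of_norm_hasDerivWithin_le
        (fun t _ => (hf' t).hasDerivWithinAt) hB hx (hxy ht)
    _ ≤ B * |y - x| := mul_le_mul_of_nonneg_left (abs_sub_left_of_mem_uIcc ht) hB0
  have := (convex_uIcc x y).norm_image_sub_le_of_norm_hasDerivWithin_le
    (f := fun t => f t - t • f' x)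
    (fun t _ => ((hf t).sub ((hasDerivAt_id t).smul_const (f' x))).hasDerivWithinAt)
    (fun t ht => by rw [one_smul]; exact hlip t ht) left_mem_uIcc right_mem_uIcc
  calc ‖f y - f x - (y - x) • f' x‖ = ‖(f y - y • f' x) - (f x - x • f' x)‖ := by
        rw [sub_smul]; abel_nf
    _ ≤ B * |y - x| * ‖y - x‖ := this
    _ = B * (y - x) ^ 2 := by rw [Real.norm_eq_abs, mul_assoc, ← sq, sq_abs]

theorem exists_linear_bound_of_unique_zero {f : ℝ → ℝ} {lo hi d : ℝ} (hf : Continuous f)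
    (hd : HasDerivAt f d 0) (hd0 : 0 < d) (h0 : (0 : ℝ) ∈ Icc lo hi) (hf0 : f 0 = 0)
    (hzero : ∀ t ∈ Icc lo hi, f t = 0 → t = 0) :
    ∃ c > 0, ∀ t ∈ Icc lo hi, (0 ≤ t → c * t ≤ f t) ∧ (t ≤ 0 → f t ≤ c * t) := by
  set g := dslope f 0
  have hfg : ∀ t, f t = t * g t := fun t => by
    simpa [hf0] using (sub_smul_dslope f 0 t).symm
  have hg : Continuous g := continuous_iff_continuousAt.mpr fun t => by
    rcases eq_or_ne t 0 with rfl | ht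
    · exact continuousAt_dslope_same.mpr hd.differentiableAt
    · exact (continuousAt_dslope_of_ne ht).mpr hf.continuousAt
  have hg0 : g 0 = d := by rw [← hd.deriv]; exact dslope_same f 0
  have hgpos : ∀ t ∈ Icc lo hi, 0 < g t := fun t ht => by
    by_contra! hgt
    obtain ⟨t', ht', hgt'⟩ := isPreconnected_Icc.intermediate_value ht h0 hg.continuousOn
      ⟨hgt, hg0 ▸ hd0.le⟩
    have := hzero t' ht' (by rw [hfg, hgt', mul_zero])
    exact hd0.ne' (hg0 ▸ this ▸ hgt')
  obtain ⟨t₀, ht₀, hmin⟩ := isCompact_Icc.exists_isMinOn ⟨0, h0⟩ hg.continuousOn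
  refine ⟨g t₀, hgpos t₀ ht₀, fun t ht => ⟨fun h => ?_, fun h => ?_⟩⟩ <;> rw [hfg, mul_comm t]
  · exact mul_le_mul_of_nonneg_right (hmin ht) h
  · exact mul_le_mul_of_nonpos_right (hmin ht) h

theorem monotoneOn_sign_of_neg_of_pos {u : ℝ → ℝ} {s : Set ℝ} {δ : ℝ}
    (hneg : ∀ a ∈ s, a ≤ -δ → u a < 0) (hpos : ∀ a ∈ s, δ ≤ a → 0 < u a)
    (hmono : MonotoneOn u (s ∩ Icc (-δ) δ)) : MonotoneOn (fun a => SignType.sign (u a)) s := by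
  intro a ha b hb hab
  by_cases hb' : δ ≤ b
  · simpa only [sign_pos (hpos b hb hb')] using SignType.le_one _
  by_cases ha' : a ≤ -δ
  · simpa only [sign_neg (hneg a ha ha')] using SignType.neg_one_le _
  exact SignType.sign.monotone
    (hmono ⟨ha, by linarith, by linarith⟩ ⟨hb, by linarith, by linarith⟩ hab)

theorem ordConnected_setOf_neg_and_neg {u v : ℝ → ℝ} {s : Set ℝ} {σ τ : ℝ}
    (hs : s.OrdConnected) (hστ : σ * τ < 0)
    (hu : MonotoneOn (fun a => SignType.sign (σ * u a)) s)
    (hv : MonotoneOn (fun a => SignType.sign (τ * v a)) s) :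
    {a | a ∈ s ∧ u a < 0 ∧ v a < 0}.OrdConnected := by
  have down : ∀ {w : ℝ → ℝ}, MonotoneOn (fun a => SignType.sign (w a)) s →
      ∀ {x y}, x ∈ s → y ∈ s → x ≤ y → w y < 0 → w x < 0 := fun {w} hw {x y} hx hy hxy h =>
    sign_eq_neg_one_iff.mp (le_antisymm ((hw hx hy hxy).trans (sign_neg h).le)
      (SignType.neg_one_le _))
  have up : ∀ {w : ℝ → ℝ}, MonotoneOn (fun a => SignType.sign (w a)) s →
      ∀ {x y}, x ∈ s → y ∈ s → x ≤ y → 0 < w x → 0 < w y := fun {w} hw {x y} hx hy hxy h =>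
    sign_eq_one_iff.mp (le_antisymm (SignType.le_one _) ((sign_pos h).ge.trans (hw hx hy hxy)))
  refine ⟨fun a ⟨ha, hua, hva⟩ b ⟨hb, hub, hvb⟩ x ⟨hax, hxb⟩ => ?_⟩
  have hx : x ∈ s := hs.out ha hb ⟨hax, hxb⟩
  refine ⟨hx, ?_⟩
  rcases lt_or_gt_of_ne (left_ne_zero_of_mul hστ.ne) with hσ | hσ
  · have hτ : 0 < τ := pos_of_mul_neg_right hστ hσ.le
    refine ⟨?_, ?_⟩
    · have := up hu ha hx hax (mul_pos_of_neg_of_neg hσ hua)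
      nlinarith
    · have := down hv hx hb hxb (mul_neg_of_pos_of_neg hτ hvb)
      nlinarith
  · have hτ : τ < 0 := neg_of_mul_neg_right hστ hσ.le
    refine ⟨?_, ?_⟩
    · have := down hu hx hb hxb (mul_neg_of_pos_of_neg hσ hub)
      nlinarith
    · have := up hv ha hx hax (mul_pos_of_neg_of_neg hτ hva)
      nlinarith

theorem Nat.exists_eq_Icc_of_ordConnected {S : Set ℕ} (hS : S.OrdConnected) (hb : BddAbove S) :
    ∃ k K : ℕ, S = Icc k K := by
  rcases S.eq_empty_or_nonempty with rfl | hne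
  · exact ⟨1, 0, (Icc_eq_empty (by norm_num)).symm⟩
  · exact ⟨sInf S, sSup S, Subset.antisymm (fun j hj => ⟨Nat.sInf_le hj, le_csSup hb hj⟩)
      (hS.out (Nat.sInf_mem hne) (Nat.sSup_mem hne hb))⟩

theorem abs_dot2_le (p q : ℝ × ℝ) : |dot2 p q| ≤ 2 * (‖p‖ * ‖q‖) := by
  have h1 : |p.1 * q.1| ≤ ‖p‖ * ‖q‖ := by
    rw [abs_mul]; exact mul_le_mul (norm_fst_le p) (norm_fst_le q) (abs_nonneg _) (norm_nonneg _)
  have h2 : |p.2 * q.2| ≤ ‖p‖ * ‖q‖ := by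
    rw [abs_mul]; exact mul_le_mul (norm_snd_le p) (norm_snd_le q) (abs_nonneg _) (norm_nonneg _)
  unfold dot2
  linarith [abs_add_le (p.1 * q.1) (p.2 * q.2)]

theorem HasDerivAt.dot2 {f g : ℝ → ℝ × ℝ} {f' g' : ℝ × ℝ} {t : ℝ} (hf : HasDerivAt f f' t)
    (hg : HasDerivAt g g' t) :
    HasDerivAt (fun s => dot2 (f s) (g s)) (dot2 f' (g t) + dot2 (f t) g') t := by
  have hf₁ : HasDerivAt (fun s => (f s).1) f'.1 t := hf.fst
  have hf₂ : HasDerivAt (fun s => (f s).2) f'.2 t := hf.snd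
  have hg₁ : HasDerivAt (fun s => (g s).1) g'.1 t := hg.fst
  have hg₂ : HasDerivAt (fun s => (g s).2) g'.2 t := hg.snd
  exact ((hf₁.mul hg₁).add (hf₂.mul hg₂)).congr_deriv (by unfold _root_.dot2; ring)

theorem sideCarries_iff (p q : ℝ × ℝ) :
    SideCarries p q ↔ dot2 p (q - p) < 0 ∧ dot2 q (p - q) < 0 := by
  have : dot2 q (p - q) = -dot2 q (q - p) := by simp only [dot2, Prod.fst_sub, Prod.snd_sub]; ring
  rw [SideCarries, this, neg_lt_zero]

def radialDeriv (r : ℝ → ℝ × ℝ) (t : ℝ) : ℝ := dot2 (r t) (deriv r t)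

def chordDot (r : ℝ → ℝ × ℝ) (θ b : ℝ) : ℝ := dot2 (r b) (r (b + θ) - r b)

section Curve

variable {r : ℝ → ℝ × ℝ} {lo hi B : ℝ}

theorem isEquilib_origin_iff (τ : ℝ) : IsEquilib r (0, 0) τ ↔ radialDeriv r τ = 0 := by
  rw [IsEquilib, radialDeriv, Prod.mk_zero_zero, sub_zero, dot2, dot2, mul_comm (r τ).1,
    mul_comm (r τ).2]

theorem hasDerivAt_radialDeriv (hr : ContDiff ℝ 2 r) (t : ℝ) :
    HasDerivAt (radialDeriv r)
      (dot2 (deriv r t) (deriv r t) + dot2 (r t) (deriv^[2] r t)) t :=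
  (hr.hasDerivAt_iterate_deriv (k := 0) (by norm_num) t).dot2
    (hr.hasDerivAt_iterate_deriv (k := 1) (by norm_num) t)

theorem hasDerivAt_chordDot (hr : ContDiff ℝ 2 r) (θ b : ℝ) :
    HasDerivAt (chordDot r θ)
      (dot2 (deriv r b) (r (b + θ) - r b) + dot2 (r b) (deriv r (b + θ) - deriv r b)) b := by
  have hd (t : ℝ) : HasDerivAt r (deriv r t) t :=
    hr.hasDerivAt_iterate_deriv (k := 0) (by norm_num) t
  have hshift : HasDerivAt (fun s => r (s + θ)) (deriv r (b + θ)) b := by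
    simpa using (hd (b + θ)).comp_add_const b θ
  exact (hd b).dot2 (hshift.sub (hd b))

theorem abs_chordDot_sub_le (hr : ContDiff ℝ 2 r)
    (hB : ∀ k ≤ 2, ∀ t ∈ Icc lo hi, ‖deriv^[k] r t‖ ≤ B) {θ b : ℝ}
    (hb : b ∈ Icc lo hi) (hbθ : b + θ ∈ Icc lo hi) :
    |chordDot r θ b - θ * radialDeriv r b| ≤ 2 * B ^ 2 * θ ^ 2 := by
  have hB0 : 0 ≤ B := (norm_nonneg _).trans (hB 0 (by norm_num) b hb)
  have htaylor := norm_sub_sub_smul_le_of_norm_deriv_le (convex_Icc lo hi)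
    (hr.hasDerivAt_iterate_deriv (k := 0) (by norm_num))
    (hr.hasDerivAt_iterate_deriv (k := 1) (by norm_num)) (hB 2 le_rfl) hb hbθ
  have heq : chordDot r θ b - θ * radialDeriv r b
      = dot2 (r b) (r (b + θ) - r b - (b + θ - b) • deriv r b) := by
    simp only [chordDot, radialDeriv, dot2, Prod.fst_sub, Prod.snd_sub, Prod.smul_fst,
      Prod.smul_snd, smul_eq_mul]
    ring
  calc |chordDot r θ b - θ * radialDeriv r b|
      ≤ 2 * (‖r b‖ * ‖r (b + θ) - r b - (b + θ - b) • deriv r b‖) := heq ▸ abs_dot2_le _ _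
    _ ≤ 2 * (B * (B * (b + θ - b) ^ 2)) := by
        gcongr
        · exact hB 0 (by norm_num) b hb
        · exact htaylor
    _ = 2 * B ^ 2 * θ ^ 2 := by ring

theorem contDiff_radialDeriv {n : ℕ} (hr : ContDiff ℝ (n + 1) r) :
    ContDiff ℝ n (radialDeriv r) := by
  have h₀ : ContDiff ℝ n r := hr.of_le (by norm_cast; omega)
  have h₁ : ContDiff ℝ n (deriv r) := hr.iterate_deriv' n 1
  unfold radialDeriv dot2
  exact (h₀.fst.mul h₁.fst).add (h₀.snd.mul h₁.snd)

theorem abs_deriv_chordDot_sub_le (hr : ContDiff ℝ 3 r)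
    (hB : ∀ k ≤ 3, ∀ t ∈ Icc lo hi, ‖deriv^[k] r t‖ ≤ B) {θ b : ℝ}
    (hb : b ∈ Icc lo hi) (hbθ : b + θ ∈ Icc lo hi) :
    |deriv (chordDot r θ) b - θ * deriv (radialDeriv r) b| ≤ 4 * B ^ 2 * θ ^ 2 := by
  have hr₂ : ContDiff ℝ 2 r := hr.of_le (by norm_num)
  have hB0 : 0 ≤ B := (norm_nonneg _).trans (hB 0 (by norm_num) b hb)
  have hd (k : ℕ) (hk : k < 3) := hr.hasDerivAt_iterate_deriv hk
  have htaylor₀ := norm_sub_sub_smul_le_of_norm_deriv_le (convex_Icc lo hi) (hd 0 (by norm_num))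
    (hd 1 (by norm_num)) (hB 2 (by norm_num)) hb hbθ
  have htaylor₁ := norm_sub_sub_smul_le_of_norm_deriv_le (convex_Icc lo hi) (hd 1 (by norm_num))
    (hd 2 (by norm_num)) (hB 3 le_rfl) hb hbθ
  rw [(hasDerivAt_chordDot hr₂ θ b).deriv, (hasDerivAt_radialDeriv hr₂ b).deriv]
  have heq : dot2 (deriv r b) (r (b + θ) - r b) + dot2 (r b) (deriv r (b + θ) - deriv r b)
        - θ * (dot2 (deriv r b) (deriv r b) + dot2 (r b) (deriv^[2] r b))
      = dot2 (deriv r b) (r (b + θ) - r b - (b + θ - b) • deriv r b)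
        + dot2 (r b) (deriv r (b + θ) - deriv r b - (b + θ - b) • deriv^[2] r b) := by
    simp only [dot2, Prod.fst_sub, Prod.snd_sub, Prod.smul_fst, Prod.smul_snd, smul_eq_mul]
    ring
  rw [heq]
  calc _ ≤ 2 * (‖deriv r b‖ * ‖r (b + θ) - r b - (b + θ - b) • deriv r b‖)
        + 2 * (‖r b‖ * ‖deriv r (b + θ) - deriv r b - (b + θ - b) • deriv^[2] r b‖) :=
        (abs_add_le _ _).trans (add_le_add (abs_dot2_le _ _) (abs_dot2_le _ _))
    _ ≤ 2 * (B * (B * (b + θ - b) ^ 2)) + 2 * (B * (B * (b + θ - b) ^ 2)) := by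
        gcongr
        exacts [hB 1 (by norm_num) b hb, htaylor₀, hB 0 (by norm_num) b hb, htaylor₁]
    _ = 4 * B ^ 2 * θ ^ 2 := by ring

theorem abs_mul_sub_sq_mul {σ : ℝ} (hσ : σ = 1 ∨ σ = -1) (θ x y : ℝ) :
    |θ * σ * x - θ ^ 2 * (σ * y)| = |θ| * |x - θ * y| := by
  have : |σ| = 1 := by rcases hσ with rfl | rfl <;> simp
  rw [show θ * σ * x - θ ^ 2 * (σ * y) = θ * σ * (x - θ * y) by ring, abs_mul, abs_mul, this,
    mul_one]

theorem strictMonoOn_mul_chordDot (hr : ContDiff ℝ 3 r)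
    (hB : ∀ k ≤ 3, ∀ t ∈ Icc lo hi, ‖deriv^[k] r t‖ ≤ B) {σ η κ θ : ℝ} (hσ : σ = 1 ∨ σ = -1)
    (hκ : ∀ t ∈ Icc (-η) η, κ ≤ σ * deriv (radialDeriv r) t) (hθ : θ ≠ 0)
    (hθκ : 4 * B ^ 2 * |θ| < κ) :
    StrictMonoOn (fun b => θ * σ * chordDot r θ b)
      ({b | b ∈ Icc lo hi ∧ b + θ ∈ Icc lo hi} ∩ Icc (-η) η) := by
  have hr₂ : ContDiff ℝ 2 r := hr.of_le (by norm_num)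
  have hθ2 : 0 < θ ^ 2 := by positivity
  have hconv : Convex ℝ ({b | b ∈ Icc lo hi ∧ b + θ ∈ Icc lo hi} ∩ Icc (-η) η) :=
    ((ordConnected_Icc.inter (ordConnected_Icc.preimage_mono (monotone_id.add_const θ))).inter
      ordConnected_Icc).convex
  refine strictMonoOn_of_deriv_pos hconv (fun b _ => ?_) fun b hb => ?_
  · exact ((hasDerivAt_chordDot hr₂ θ b).const_mul (θ * σ)).continuousAt.continuousWithinAt
  have hb' := interior_subset hb
  rw [deriv_const_mul _ (hasDerivAt_chordDot hr₂ θ b).differentiableAt]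
  have hderiv : |θ * σ * deriv (chordDot r θ) b - θ ^ 2 * (σ * deriv (radialDeriv r) b)|
      ≤ θ ^ 2 * (4 * B ^ 2 * |θ|) := by
    rw [abs_mul_sub_sq_mul hσ]
    have := abs_deriv_chordDot_sub_le hr hB hb'.1.1 hb'.1.2
    nlinarith [abs_nonneg θ, sq_abs θ]
  linarith [(abs_le.mp hderiv).1, mul_le_mul_of_nonneg_left (hκ b hb'.2) hθ2.le,
    mul_lt_mul_of_pos_left hθκ hθ2]

theorem monotoneOn_sign_chordDot (hr : ContDiff ℝ 3 r)
    (hB : ∀ k ≤ 3, ∀ t ∈ Icc lo hi, ‖deriv^[k] r t‖ ≤ B) {σ c η κ θ : ℝ}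
    (hσ : σ = 1 ∨ σ = -1) (hc : 0 < c) (hgrowth : ∀ t ∈ Icc lo hi,
      (0 ≤ t → c * t ≤ σ * radialDeriv r t) ∧ (t ≤ 0 → σ * radialDeriv r t ≤ c * t))
    (hκ : ∀ t ∈ Icc (-η) η, κ ≤ σ * deriv (radialDeriv r) t) (hθ : θ ≠ 0)
    (hθc : 4 * B ^ 2 * |θ| < c * η) (hθκ : 4 * B ^ 2 * |θ| < κ) :
    MonotoneOn (fun b => SignType.sign (θ * σ * chordDot r θ b))
      {b | b ∈ Icc lo hi ∧ b + θ ∈ Icc lo hi} := by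
  have hθ2 : 0 < θ ^ 2 := by positivity
  have hη : 0 < η := pos_of_mul_pos_right ((by positivity : 0 ≤ 4 * B ^ 2 * |θ|).trans_lt hθc) hc.le
  have happrox (b : ℝ) (hb : b ∈ Icc lo hi ∧ b + θ ∈ Icc lo hi) :
      |θ * σ * chordDot r θ b - θ ^ 2 * (σ * radialDeriv r b)| ≤ θ ^ 2 * (4 * B ^ 2 * |θ|) := by
    rw [abs_mul_sub_sq_mul hσ]
    have := abs_chordDot_sub_le (hr.of_le (by norm_num)) (fun k hk => hB k (by omega)) hb.1 hb.2
    nlinarith [abs_nonneg θ, sq_abs θ, sq_nonneg (B * θ)]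
  refine monotoneOn_sign_of_neg_of_pos (δ := η) (fun b hb hbη => ?_) (fun b hb hbη => ?_)
    (strictMonoOn_mul_chordDot hr hB hσ hκ hθ hθκ).monotoneOn
  · have hD := (hgrowth b hb.1).2 (by linarith)
    linarith [(abs_le.mp (happrox b hb)).2, mul_le_mul_of_nonneg_left hD hθ2.le,
      mul_lt_mul_of_pos_left hθc hθ2, mul_le_mul_of_nonneg_left hbη (mul_pos hc hθ2).le]
  · have hD := (hgrowth b hb.1).1 (by linarith)
    linarith [(abs_le.mp (happrox b hb)).1, mul_le_mul_of_nonneg_left hD hθ2.le,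
      mul_lt_mul_of_pos_left hθc hθ2, mul_le_mul_of_nonneg_left hbη (mul_pos hc hθ2).le]

theorem abs_le_of_sideCarries (hr : ContDiff ℝ 2 r)
    (hB : ∀ k ≤ 2, ∀ t ∈ Icc lo hi, ‖deriv^[k] r t‖ ≤ B) {σ c Δ a : ℝ} (hσ : σ = 1 ∨ σ = -1)
    (hc : 0 < c) (hgrowth : ∀ t ∈ Icc lo hi,
      (0 ≤ t → c * t ≤ σ * radialDeriv r t) ∧ (t ≤ 0 → σ * radialDeriv r t ≤ c * t))
    (hΔ : 0 < Δ) (ha : a ∈ Icc lo hi) (haΔ : a + Δ ∈ Icc lo hi)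
    (hcarry : SideCarries (r a) (r (a + Δ))) : |a| ≤ (2 * B ^ 2 / c + 1) * Δ := by
  rw [sideCarries_iff] at hcarry
  have hstart := abs_chordDot_sub_le hr hB ha haΔ
  have hend := abs_chordDot_sub_le hr hB haΔ (θ := -Δ) (by simpa using ha)
  simp only [chordDot, add_neg_cancel_right, neg_sq] at hstart hend
  have hDa : radialDeriv r a < 2 * B ^ 2 * Δ := by
    refine lt_of_mul_lt_mul_left ?_ hΔ.le
    linarith [(abs_le.mp hstart).1]
  have hDb : -(2 * B ^ 2 * Δ) < radialDeriv r (a + Δ) := by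
    refine lt_of_mul_lt_mul_left ?_ hΔ.le
    linarith [(abs_le.mp hend).1]
  obtain ⟨ha₁, ha₂⟩ := hgrowth a ha
  obtain ⟨hb₁, hb₂⟩ := hgrowth (a + Δ) haΔ
  have hK : 0 ≤ 2 * B ^ 2 * Δ := by positivity
  have hcΔ : c * (a + Δ) = c * a + c * Δ := mul_add c a Δ
  have hcΔ' : 0 < c * Δ := mul_pos hc hΔ
  have hupper : c * a ≤ 2 * B ^ 2 * Δ := by
    rcases le_or_gt 0 a with h | h
    · rcases hσ with rfl | rfl
      · linarith [ha₁ h]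
      · linarith [hb₁ (by linarith)]
    · linarith [mul_neg_of_pos_of_neg hc h]
  have hlower : -(2 * B ^ 2 * Δ) ≤ c * (a + Δ) := by
    rcases le_or_gt (a + Δ) 0 with h | h
    · rcases hσ with rfl | rfl
      · linarith [hb₂ h]
      · linarith [ha₂ (by linarith)]
    · linarith [mul_pos hc h]
  have h₁ : a ≤ 2 * B ^ 2 * Δ / c := (le_div_iff₀ hc).mpr (by linarith)
  have h₂ : -(2 * B ^ 2 * Δ) / c ≤ a + Δ := (div_le_iff₀ hc).mpr (by linarith)
  have : (2 * B ^ 2 / c + 1) * Δ = 2 * B ^ 2 * Δ / c + Δ := by ring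
  rw [abs_le, this]
  constructor <;> linarith [neg_div c (2 * B ^ 2 * Δ)]

theorem exists_growth_radialDeriv (hr : ContDiff ℝ 2 r) (h0 : (0 : ℝ) ∈ Icc lo hi)
    (hD0 : radialDeriv r 0 = 0) (hzero : ∀ t ∈ Icc lo hi, radialDeriv r t = 0 → t = 0)
    (hD' : deriv (radialDeriv r) 0 ≠ 0) :
    ∃ σ : ℝ, (σ = 1 ∨ σ = -1) ∧ ∃ c > 0, ∃ η > 0, ∃ κ > 0,
      (∀ t ∈ Icc lo hi,
        (0 ≤ t → c * t ≤ σ * radialDeriv r t) ∧ (t ≤ 0 → σ * radialDeriv r t ≤ c * t)) ∧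
      ∀ t ∈ Icc (-η) η, κ ≤ σ * deriv (radialDeriv r) t := by
  have hD : ContDiff ℝ 1 (radialDeriv r) := contDiff_radialDeriv hr
  obtain ⟨σ, hσ, hσD⟩ : ∃ σ : ℝ, (σ = 1 ∨ σ = -1) ∧ 0 < σ * deriv (radialDeriv r) 0 := by
    rcases hD'.lt_or_gt with h | h
    · exact ⟨-1, Or.inr rfl, by linarith⟩
    · exact ⟨1, Or.inl rfl, by linarith⟩
  have hσ0 : σ ≠ 0 := by rcases hσ with rfl | rfl <;> norm_num
  obtain ⟨c, hc, hgrowth⟩ := exists_linear_bound_of_unique_zero (f := fun t => σ * radialDeriv r t)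
    (continuous_const.mul hD.continuous) ((hD.differentiable one_ne_zero 0).hasDerivAt.const_mul σ)
    hσD h0 (by simp only [hD0, mul_zero])
    (fun t ht h => hzero t ht ((mul_eq_zero.mp h).resolve_left hσ0))
  have hcont : Continuous fun t => σ * deriv (radialDeriv r) t :=
    continuous_const.mul (hD.continuous_deriv le_rfl)
  obtain ⟨ε, hε, hnear⟩ := Metric.eventually_nhds_iff.mp
    (hcont.continuousAt.eventually (lt_mem_nhds (half_lt_self hσD)))
  refine ⟨σ, hσ, c, hc, ε / 2, half_pos hε, _, half_pos hσD, hgrowth, fun t ht => (hnear ?_).le⟩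
  rw [Real.dist_eq, sub_zero, abs_lt]
  constructor <;> linarith [ht.1, ht.2]

theorem exists_sideCarries_ordConnected_and_abs_le (hr : ContDiff ℝ 3 r)
    (h0 : (0 : ℝ) ∈ Icc lo hi) (hD0 : radialDeriv r 0 = 0)
    (hzero : ∀ t ∈ Icc lo hi, radialDeriv r t = 0 → t = 0)
    (hD' : deriv (radialDeriv r) 0 ≠ 0) :
    ∃ Δ₀ > 0, ∃ C, ∀ Δ, 0 < Δ → Δ < Δ₀ →
      {a | a ∈ Icc lo (hi - Δ) ∧ SideCarries (r a) (r (a + Δ))}.OrdConnected ∧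
      ∀ a ∈ Icc lo (hi - Δ), SideCarries (r a) (r (a + Δ)) → |a| ≤ C * Δ := by
  obtain ⟨σ, hσ, c, hc, η, hη, κ, hκ0, hgrowth, hκ⟩ :=
    exists_growth_radialDeriv (hr.of_le (by norm_num)) h0 hD0 hzero hD'
  obtain ⟨B, hB⟩ := ContDiff.exists_bound_iterate_deriv (n := 3) (by exact_mod_cast hr)
    (isCompact_Icc (a := lo) (b := hi))
  have hmin : 0 < min (c * η) κ := lt_min (mul_pos hc hη) hκ0
  refine ⟨min (c * η) κ / (4 * B ^ 2 + 1), by positivity, 2 * B ^ 2 / c + 1,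
    fun Δ hΔ hΔ₀ => ?_⟩
  have hsmall : 4 * B ^ 2 * Δ < min (c * η) κ := by
    rw [lt_div_iff₀ (by positivity)] at hΔ₀
    linarith
  have hmem (a : ℝ) (ha : a ∈ Icc lo (hi - Δ)) : a ∈ Icc lo hi ∧ a + Δ ∈ Icc lo hi :=
    ⟨⟨ha.1, by linarith [ha.2]⟩, ⟨by linarith [ha.1], by linarith [ha.2]⟩⟩
  have hsign (θ : ℝ) (hθ : |θ| = Δ) := monotoneOn_sign_chordDot hr hB hσ hc hgrowth hκ
    (abs_pos.mp (hθ ▸ hΔ)) (hθ ▸ hsmall.trans_le (min_le_left _ _))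
    (hθ ▸ hsmall.trans_le (min_le_right _ _))
  refine ⟨?_, fun a ha hcarry => abs_le_of_sideCarries (hr.of_le (by norm_num))
    (fun k hk => hB k (by omega)) hσ hc hgrowth hΔ (hmem a ha).1 (hmem a ha).2 hcarry⟩
  have hset : {a | a ∈ Icc lo (hi - Δ) ∧ SideCarries (r a) (r (a + Δ))}
      = {a | a ∈ Icc lo (hi - Δ) ∧ chordDot r Δ a < 0 ∧ chordDot r (-Δ) (a + Δ) < 0} := by
    ext a
    simp only [mem_ofPred_eq, sideCarries_iff, chordDot, add_neg_cancel_right]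
  rw [hset]
  refine ordConnected_setOf_neg_and_neg ordConnected_Icc (σ := Δ * σ) (τ := -Δ * σ)
    (by rcases hσ with rfl | rfl <;> nlinarith)
    ((hsign Δ (abs_of_pos hΔ)).mono fun a ha => hmem a ha) fun a ha b hb hab => ?_
  have hmem' (x : ℝ) (hx : x ∈ Icc lo (hi - Δ)) : x + Δ ∈ Icc lo hi ∧ x + Δ + -Δ ∈ Icc lo hi :=
    ⟨(hmem x hx).2, by simpa using (hmem x hx).1⟩
  exact hsign (-Δ) (by rw [abs_neg, abs_of_pos hΔ]) (hmem' a ha) (hmem' b hb) (by linarith)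

theorem radialDeriv_zero {ρ : ℝ} (hm : r 0 = (0, ρ)) (hy : (deriv r 0).2 = 0) :
    radialDeriv r 0 = 0 := by
  simp only [radialDeriv, dot2, hm, hy, zero_mul, mul_zero, add_zero]

theorem deriv_radialDeriv_zero (hr : ContDiff ℝ 2 r) {ρ : ℝ} (hm : r 0 = (0, ρ))
    (hy : (deriv r 0).2 = 0) (hx : 0 < (deriv r 0).1) :
    deriv (radialDeriv r) 0 = (deriv r 0).1 ^ 2 * (1 + curv r 0 * ρ) := by
  have hnorm : enorm2 (deriv r 0) = (deriv r 0).1 := by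
    rw [enorm2, dot2, hy, mul_zero, add_zero, Real.sqrt_mul_self hx.le]
  rw [(hasDerivAt_radialDeriv hr 0).deriv, curv, hnorm, hy, hm]
  simp only [dot2, hy, show deriv^[2] r = deriv (deriv r) from rfl]
  field_simp
  ring

end Curve

theorem grid_mem_Icc_iff {lo hi : ℝ} (hlt : lo < hi) {n : ℕ} (hn : 0 < n) (j : ℕ) :
    lo + j * ((hi - lo) / n) ∈ Icc lo (hi - (hi - lo) / n) ↔ j + 1 ≤ n := by
  have hΔ : 0 < (hi - lo) / n := div_pos (by linarith) (by exact_mod_cast hn)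
  have hhi : hi - (hi - lo) / n = lo + ((n : ℝ) - 1) * ((hi - lo) / n) := by
    field_simp
    ring
  rw [mem_Icc, hhi, add_le_add_iff_left, mul_le_mul_iff_of_pos_right hΔ, le_sub_iff_add_le]
  exact ⟨fun h => by exact_mod_cast h.2,
    fun h => ⟨le_add_of_nonneg_right (by positivity), by exact_mod_cast h⟩⟩

theorem no_irregular_equilibrium_sequences_general
    (τlo τhi ρ : ℝ) (r : ℝ → ℝ × ℝ)
    (hτlo : τlo < 0) (hτhi : 0 < τhi)
    (hr : ContDiff ℝ 3 r)
    (hm : r 0 = (0, ρ))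
    (hx : ∀ τ ∈ Icc τlo τhi, 0 < (deriv r τ).1)
    (hy : (deriv r 0).2 = 0)
    (huniq : ∀ τ ∈ Icc τlo τhi, IsEquilib r (0, 0) τ → τ = 0)
    (hκ₂ : 1 + curv r 0 * ρ ≠ 0) :
    (∃ Δ₀ > (0 : ℝ), ∀ n : ℕ, 0 < n → (τhi - τlo) / n < Δ₀ →
      ∃ k K : ℕ, ∀ j : ℕ, j + 1 ≤ n →
        (SideCarries (r (τlo + (j : ℝ) * ((τhi - τlo) / n)))
            (r (τlo + ((j : ℝ) + 1) * ((τhi - τlo) / n))) ↔ k ≤ j ∧ j ≤ K)) ∧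
    ¬ ∃ (n : ℕ → ℕ) (i : ℕ → ℝ),
        (∀ m, 0 < n m) ∧
        Tendsto (fun m => (τhi - τlo) / (n m : ℝ)) atTop (nhds 0) ∧
        (∀ m, ∃ j : ℕ, j + 1 ≤ n m ∧
          i m * ((τhi - τlo) / (n m : ℝ)) = τlo + (j : ℝ) * ((τhi - τlo) / (n m : ℝ)) ∧
          SideCarries (r (i m * ((τhi - τlo) / (n m : ℝ))))
            (r ((i m + 1) * ((τhi - τlo) / (n m : ℝ))))) ∧
        Tendsto (fun m => |i m|) atTop atTop := by
  have h0 : (0 : ℝ) ∈ Icc τlo τhi := ⟨hτlo.le, hτhi.le⟩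
  have hlt : τlo < τhi := hτlo.trans hτhi
  obtain ⟨Δ₀, hΔ₀, C, hkey⟩ := exists_sideCarries_ordConnected_and_abs_le hr h0
    (radialDeriv_zero hm hy) (fun t ht h => huniq t ht ((isEquilib_origin_iff t).mpr h))
    (by rw [deriv_radialDeriv_zero (hr.of_le (by norm_num)) hm hy (hx 0 h0)]
        exact mul_ne_zero (pow_pos (hx 0 h0) 2).ne' hκ₂)
  refine ⟨⟨Δ₀, hΔ₀, fun n hn hΔ => ?_⟩, ?_⟩
  · have hΔpos : 0 < (τhi - τlo) / n := div_pos (by linarith) (by exact_mod_cast hn)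
    obtain ⟨k, K, hS⟩ := Nat.exists_eq_Icc_of_ordConnected
      ((hkey _ hΔpos hΔ).1.preimage_mono (f := fun j : ℕ => τlo + j * ((τhi - τlo) / n))
        fun a b hab => (add_le_add_iff_left τlo).mpr
          (mul_le_mul_of_nonneg_right (Nat.cast_le.mpr hab) hΔpos.le))
      ⟨n, fun j hj => by have := (grid_mem_Icc_iff hlt hn j).mp hj.1; omega⟩
    refine ⟨k, K, fun j hj => ?_⟩
    rw [← mem_Icc, ← hS, mem_preimage, mem_ofPred_eq, add_one_mul, ← add_assoc]
    exact (and_iff_right ((grid_mem_Icc_iff hlt hn j).mpr hj)).symm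
  · rintro ⟨n, i, hn, hΔ, hcarry, hi⟩
    obtain ⟨m, hm₁, hm₂⟩ :=
      ((hΔ.eventually (gt_mem_nhds hΔ₀)).and (hi.eventually_gt_atTop C)).exists
    obtain ⟨j, hj, heq, hsc⟩ := hcarry m
    have hΔpos : 0 < (τhi - τlo) / n m := div_pos (by linarith) (by exact_mod_cast hn m)
    rw [add_one_mul] at hsc
    have ha := (grid_mem_Icc_iff hlt (hn m) j).mpr hj
    rw [← heq] at ha
    have := (hkey _ hΔpos hm₁).2 _ ha hsc
    rw [abs_mul, abs_of_pos hΔpos] at this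
    linarith [le_of_mul_le_mul_right this hΔpos]

/-- For all sufficiently small mesh size `Δ = (τ̄ − τ̲)/n`, the set of indices
of sides of the approximating polygon carrying an equilibrium point with respect to the origin
is an interval `[k(Δ), K(Δ)]`; consequently there is no irregular equilibrium sequence, i.e.
no sequence of polygonal equilibria with mesh sizes tending to `0` and indices tending to `∞`. -/
theorem no_irregular_equilibrium_sequences
    (τlo τhi ρ : ℝ) (r : ℝ → ℝ × ℝ)
    (hτlo : τlo < 0) (hτhi : 0 < τhi)
    (hr : ContDiff ℝ 3 r)
    (hρ : 0 < ρ) (hm : r 0 = (0, ρ))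
    (hx : ∀ τ ∈ Icc τlo τhi, 0 < (deriv r τ).1)
    (hy : (deriv r 0).2 = 0)
    (huniq : ∀ τ ∈ Icc τlo τhi, IsEquilib r (0, 0) τ → τ = 0)
    (hκ₁ : 1 + curv r 0 * ρ < 1) (hκ₂ : 1 + curv r 0 * ρ ≠ 0) :
    (∃ Δ₀ > (0 : ℝ), ∀ n : ℕ, 0 < n → (τhi - τlo) / n < Δ₀ →
      ∃ k K : ℕ, ∀ j : ℕ, j + 1 ≤ n →
        (SideCarries (r (τlo + (j : ℝ) * ((τhi - τlo) / n)))
            (r (τlo + ((j : ℝ) + 1) * ((τhi - τlo) / n))) ↔ k ≤ j ∧ j ≤ K)) ∧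
    ¬ ∃ (n : ℕ → ℕ) (i : ℕ → ℝ),
        (∀ m, 0 < n m) ∧
        Tendsto (fun m => (τhi - τlo) / (n m : ℝ)) atTop (nhds 0) ∧
        (∀ m, ∃ j : ℕ, j + 1 ≤ n m ∧
          i m * ((τhi - τlo) / (n m : ℝ)) = τlo + (j : ℝ) * ((τhi - τlo) / (n m : ℝ)) ∧
          SideCarries (r (i m * ((τhi - τlo) / (n m : ℝ))))
            (r ((i m + 1) * ((τhi - τlo) / (n m : ℝ))))) ∧
        Tendsto (fun m => |i m|) atTop atTop :=
  no_irregular_equilibrium_sequences_general τlo τhi ρ r hτlo hτhi hr hm hx hy huniq hκ₂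
end
end

section
/- Let f : [0,a] × [0,b] → ℝ be a C³ function with the grid setup. If p ∈ int D is not a stationary point of f (i.e. grad f(p) ≠ 0), then p has a neighborhood U ⊆ D such that for every n ≥ 1, if a grid vertex p_{i,j} of F_n and all four of its neighbors are contained in U, then p_{i,j} is not a stationary grid vertex. -/
open Set Filter
open scoped Topology

noncomputable section

/-- The grid vertex `p_{i,j} = (ia/n, jb/n)` of the `n × n` partition of `[0,a] × [0,b]`. -/
def gridPt (a b : ℝ) (n i j : ℕ) : ℝ × ℝ := ((i : ℝ) * a / n, (j : ℝ) * b / n)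

/-- Partial derivative with respect to the first variable. -/
def pdx (f : ℝ × ℝ → ℝ) (p : ℝ × ℝ) : ℝ := deriv (fun x => f (x, p.2)) p.1

/-- Partial derivative with respect to the second variable. -/
def pdy (f : ℝ × ℝ → ℝ) (p : ℝ × ℝ) : ℝ := deriv (fun y => f (p.1, y)) p.2

/-- The determinant of the Hessian of `f` at `p`. -/
def hessDet (f : ℝ × ℝ → ℝ) (p : ℝ × ℝ) : ℝ :=
  pdx (pdx f) p * pdy (pdy f) p - pdx (pdy f) p * pdy (pdx f) p

/-- `p` is a stationary point of `f` (vanishing gradient). -/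
def IsStationaryPt (f : ℝ × ℝ → ℝ) (p : ℝ × ℝ) : Prop := fderiv ℝ f p = 0

/-- The grid vertex `p_{i,j}` (with `1 ≤ i, j ≤ n − 1`) is a stationary grid vertex: for each
opposite pair of its neighbours, its `f`-value is `≥` both or `≤` both of their `f`-values. -/
def StationaryGridVertex (f : ℝ × ℝ → ℝ) (a b : ℝ) (n i j : ℕ) : Prop :=
  (max (f (gridPt a b n (i - 1) j)) (f (gridPt a b n (i + 1) j)) ≤ f (gridPt a b n i j) ∨
    f (gridPt a b n i j) ≤ min (f (gridPt a b n (i - 1) j)) (f (gridPt a b n (i + 1) j))) ∧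
  (max (f (gridPt a b n i (j - 1))) (f (gridPt a b n i (j + 1))) ≤ f (gridPt a b n i j) ∨
    f (gridPt a b n i j) ≤ min (f (gridPt a b n i (j - 1))) (f (gridPt a b n i (j + 1))))

/-- The grid vertex `p_{i,j}` is minimal within its grid circle of radius `r`. -/
def MinimalInCircle (f : ℝ × ℝ → ℝ) (a b : ℝ) (n i j r : ℕ) : Prop :=
  ∀ l m : ℕ, l ≤ n → m ≤ n →
    max ((i : ℤ) - l).natAbs ((j : ℤ) - m).natAbs ≤ r →
    f (gridPt a b n i j) ≤ f (gridPt a b n l m)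

/-- The grid vertex `p_{i,j}` is maximal within its grid circle of radius `r`. -/
def MaximalInCircle (f : ℝ × ℝ → ℝ) (a b : ℝ) (n i j r : ℕ) : Prop :=
  ∀ l m : ℕ, l ≤ n → m ≤ n →
    max ((i : ℤ) - l).natAbs ((j : ℤ) - m).natAbs ≤ r →
    f (gridPt a b n l m) ≤ f (gridPt a b n i j)

/-!
Near a regular point `p` some partial derivative, say `∂f/∂x`, keeps a fixed sign on a ball
around `p`. On that ball `f` is strictly monotone along every horizontal segment, so the value at a
grid vertex lies strictly between the values at its left and right neighbours, and the horizontal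
opposite pair already prevents the vertex from being stationary.
-/

theorem StrictMonoOn.not_max_le_or_le_min {α β : Type*} [LinearOrder α] [LinearOrder β]
    {g : α → β} {s : Set α} (hg : StrictMonoOn g s) {x y z : α} (hx : x ∈ s) (hy : y ∈ s)
    (hz : z ∈ s) (hxy : x < y) (hyz : y < z) :
    ¬ (max (g x) (g z) ≤ g y ∨ g y ≤ min (g x) (g z)) := by
  simp only [max_le_iff, le_min_iff, not_or, not_and_or, not_le]
  exact ⟨Or.inr (hg hy hz hyz), Or.inl (hg hx hy hxy)⟩

theorem ContinuousLinearMap.apply_one_zero_ne_zero_or_apply_zero_one_ne_zero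
    {R M : Type*} [Semiring R] [TopologicalSpace R] [AddCommMonoid M] [TopologicalSpace M]
    [Module R M] {L : R × R →L[R] M} (hL : L ≠ 0) : L (1, 0) ≠ 0 ∨ L (0, 1) ≠ 0 := by
  contrapose! hL
  exact ContinuousLinearMap.prod_ext (ContinuousLinearMap.ext_ring hL.1)
    (ContinuousLinearMap.ext_ring hL.2)

section Directional

variable {E : Type*} [NormedAddCommGroup E] [NormedSpace ℝ E] {f : E → ℝ} {U : Set E} {p v : E}

theorem strictMonoOn_comp_add_smul_of_fderiv_apply_pos (hU : IsOpen U) (hUc : Convex ℝ U)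
    (hf : DifferentiableOn ℝ f U) (hpos : ∀ x ∈ U, 0 < fderiv ℝ f x v) (q : E) :
    StrictMonoOn (fun t : ℝ => f (q + t • v)) {t | q + t • v ∈ U} := by
  have hderiv : ∀ t ∈ {t : ℝ | q + t • v ∈ U},
      HasDerivAt (fun t : ℝ => f (q + t • v)) (fderiv ℝ f (q + t • v) v) t := fun t ht =>
    (hf.differentiableAt (hU.mem_nhds ht)).hasFDerivAt.comp_hasDerivAt t
      (((hasDerivAt_id t).smul_const v).const_add q |>.congr_deriv (one_smul ℝ v))
  have hopen : IsOpen {t : ℝ | q + t • v ∈ U} := hU.preimage (by fun_prop)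
  have hconvex : Convex ℝ {t : ℝ | q + t • v ∈ U} :=
    (hUc.translate_preimage_right q).linear_preimage (LinearMap.toSpanSingleton ℝ E v)
  refine strictMonoOn_of_deriv_pos hconvex
    (fun t ht => (hderiv t ht).continuousAt.continuousWithinAt) fun t ht => ?_
  rw [hopen.interior_eq] at ht
  rw [(hderiv t ht).deriv]
  exact hpos _ ht

theorem exists_nhds_not_max_le_or_le_min_along (hf : ContDiff ℝ 1 f)
    (hv : fderiv ℝ f p v ≠ 0) :
    ∃ U ∈ 𝓝 p, ∀ q ∈ U, ∀ t : ℝ, 0 < t → q - t • v ∈ U → q + t • v ∈ U →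
      ¬ (max (f (q - t • v)) (f (q + t • v)) ≤ f q ∨
        f q ≤ min (f (q - t • v)) (f (q + t • v))) := by
  wlog hpos : 0 < fderiv ℝ f p v generalizing v
  · obtain ⟨U, hU, hUv⟩ := this (v := -v) (by simpa using hv)
      (by simpa using lt_of_le_of_ne (not_lt.1 hpos) hv)
    refine ⟨U, hU, fun q hq t ht hl hr => ?_⟩
    simp only [smul_neg, sub_neg_eq_add, ← sub_eq_add_neg] at hUv
    rw [max_comm, min_comm]
    exact hUv q hq t ht hr hl
  have hcont : Continuous fun x => fderiv ℝ f x v :=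
    (hf.continuous_fderiv one_ne_zero).clm_apply continuous_const
  obtain ⟨ε, hε, hball⟩ := Metric.mem_nhds_iff.1
    (hcont.continuousAt.eventually (lt_mem_nhds hpos))
  refine ⟨Metric.ball p ε, Metric.ball_mem_nhds p hε, fun q hq t ht hl hr => ?_⟩
  have hmono := strictMonoOn_comp_add_smul_of_fderiv_apply_pos Metric.isOpen_ball
    (convex_ball p ε) (hf.differentiable one_ne_zero).differentiableOn hball q
  rw [sub_eq_add_neg, ← neg_smul] at hl ⊢
  simpa using hmono.not_max_le_or_le_min (x := -t) (y := 0) (z := t) hl (by simpa using hq) hr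
    (by linarith) ht

end Directional

theorem gridPt_sub_one_left (a b : ℝ) (n : ℕ) {i : ℕ} (j : ℕ) (hi : 1 ≤ i) :
    gridPt a b n (i - 1) j = gridPt a b n i j - (a / n) • ((1 : ℝ), (0 : ℝ)) := by
  simp only [gridPt, Prod.smul_mk, smul_eq_mul, Prod.mk_sub_mk, Nat.cast_sub hi, Nat.cast_one]
  ext <;> ring

theorem gridPt_add_one_left (a b : ℝ) (n i j : ℕ) :
    gridPt a b n (i + 1) j = gridPt a b n i j + (a / n) • ((1 : ℝ), (0 : ℝ)) := by
  simp only [gridPt, Prod.smul_mk, smul_eq_mul, Prod.mk_add_mk, Nat.cast_add, Nat.cast_one]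
  ext <;> ring

theorem gridPt_sub_one_right (a b : ℝ) (n i : ℕ) {j : ℕ} (hj : 1 ≤ j) :
    gridPt a b n i (j - 1) = gridPt a b n i j - (b / n) • ((0 : ℝ), (1 : ℝ)) := by
  simp only [gridPt, Prod.smul_mk, smul_eq_mul, Prod.mk_sub_mk, Nat.cast_sub hj, Nat.cast_one]
  ext <;> ring

theorem gridPt_add_one_right (a b : ℝ) (n i j : ℕ) :
    gridPt a b n i (j + 1) = gridPt a b n i j + (b / n) • ((0 : ℝ), (1 : ℝ)) := by
  simp only [gridPt, Prod.smul_mk, smul_eq_mul, Prod.mk_add_mk, Nat.cast_add, Nat.cast_one]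
  ext <;> ring

theorem no_stationary_grid_vertex_near_regular_point_general
    (a b : ℝ) (ha : 0 < a) (hb : 0 < b) (f : ℝ × ℝ → ℝ)
    (hf : ContDiff ℝ 3 f)
    (p : ℝ × ℝ) (hp : p ∈ interior (Icc (0 : ℝ) a ×ˢ Icc (0 : ℝ) b))
    (hreg : ¬ IsStationaryPt f p) :
    ∃ U : Set (ℝ × ℝ), U ∈ nhds p ∧ U ⊆ Icc (0 : ℝ) a ×ˢ Icc (0 : ℝ) b ∧
      ∀ n : ℕ, 0 < n → ∀ i j : ℕ, 1 ≤ i → i + 1 ≤ n → 1 ≤ j → j + 1 ≤ n →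
        gridPt a b n i j ∈ U →
        gridPt a b n (i - 1) j ∈ U → gridPt a b n (i + 1) j ∈ U →
        gridPt a b n i (j - 1) ∈ U → gridPt a b n i (j + 1) ∈ U →
        ¬ StationaryGridVertex f a b n i j := by
  have hC1 : ContDiff ℝ 1 f := hf.of_le (by norm_num)
  have hD : interior (Icc (0 : ℝ) a ×ˢ Icc (0 : ℝ) b) ∈ 𝓝 p := isOpen_interior.mem_nhds hp
  rcases (fderiv ℝ f p).apply_one_zero_ne_zero_or_apply_zero_one_ne_zero hreg with hx | hy
  · obtain ⟨U, hU, hUx⟩ := exists_nhds_not_max_le_or_le_min_along hC1 hx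
    refine ⟨U ∩ interior _, inter_mem hU hD, inter_subset_right.trans interior_subset, ?_⟩
    intro n hn i j hi _ _ _ hq hl hr _ _ hstat
    unfold StationaryGridVertex at hstat
    simp only [gridPt_sub_one_left a b n j hi, gridPt_add_one_left] at hl hr hstat
    exact hUx _ hq.1 _ (by positivity) hl.1 hr.1 hstat.1
  · obtain ⟨U, hU, hUy⟩ := exists_nhds_not_max_le_or_le_min_along hC1 hy
    refine ⟨U ∩ interior _, inter_mem hU hD, inter_subset_right.trans interior_subset, ?_⟩
    intro n hn i j _ _ hj _ hq _ _ hl hr hstat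
    unfold StationaryGridVertex at hstat
    simp only [gridPt_sub_one_right a b n i hj, gridPt_add_one_right] at hl hr hstat
    exact hUy _ hq.1 _ (by positivity) hl.1 hr.1 hstat.2

/-- If `p ∈ int D` is not a stationary point of `f`, then `p` has a
neighbourhood `U ⊆ D` such that for every `n ≥ 1`, any grid vertex all of whose neighbours lie
in `U` together with the vertex itself is not a stationary grid vertex. -/
theorem no_stationary_grid_vertex_near_regular_point
    (a b : ℝ) (ha : 0 < a) (hb : 0 < b) (f : ℝ × ℝ → ℝ)
    (hf : ContDiff ℝ 3 f)
    (hfin : {p ∈ Icc (0 : ℝ) a ×ˢ Icc (0 : ℝ) b | IsStationaryPt f p}.Finite)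
    (hinterior : {p ∈ Icc (0 : ℝ) a ×ˢ Icc (0 : ℝ) b | IsStationaryPt f p} ⊆
      interior (Icc (0 : ℝ) a ×ˢ Icc (0 : ℝ) b))
    (hhess : ∀ p ∈ Icc (0 : ℝ) a ×ˢ Icc (0 : ℝ) b, IsStationaryPt f p → hessDet f p ≠ 0)
    (hnondeg : ∀ n i j l m : ℕ, 0 < n → i ≤ n → j ≤ n → l ≤ n → m ≤ n →
      (i, j) ≠ (l, m) → f (gridPt a b n i j) ≠ f (gridPt a b n l m))
    (p : ℝ × ℝ) (hp : p ∈ interior (Icc (0 : ℝ) a ×ˢ Icc (0 : ℝ) b))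
    (hreg : ¬ IsStationaryPt f p) :
    ∃ U : Set (ℝ × ℝ), U ∈ nhds p ∧ U ⊆ Icc (0 : ℝ) a ×ˢ Icc (0 : ℝ) b ∧
      ∀ n : ℕ, 0 < n → ∀ i j : ℕ, 1 ≤ i → i + 1 ≤ n → 1 ≤ j → j + 1 ≤ n →
        gridPt a b n i j ∈ U →
        gridPt a b n (i - 1) j ∈ U → gridPt a b n (i + 1) j ∈ U →
        gridPt a b n i (j - 1) ∈ U → gridPt a b n i (j + 1) ∈ U →
        ¬ StationaryGridVertex f a b n i j :=
  no_stationary_grid_vertex_near_regular_point_general a b ha hb f hf p hp hreg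
end
end

section
/- Let f : [0,a] × [0,b] → ℝ be a C³ function with the grid setup. If p ∈ int D is a local minimum of f, then p has a neighborhood U and there is a sufficiently large radius r such that for every sufficiently large n there is exactly one grid vertex p_{i,j} of F_n contained in U whose f-value is minimal within its grid circle C_r(p_{i,j}). -/
open Set Filter
open scoped Topology

noncomputable section

/-!
Near a local minimum `p` whose Hessian is invertible the gradient grows linearly,
`c ‖v - p‖ ≤ ‖Df v‖`. A grid vertex that is minimal among its diagonal neighbours has, by the
second-order Taylor bound along the step against the signs of the partial derivatives, a
gradient of size `O(1/n)`, so it lies within `K / n` of `p`. Once `r ≥ 2K / min a b`, two such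
vertices lie in each other's grid circles, and non-degeneracy of the grid makes them equal.
For existence, minimise `f` over the grid vertices of a small ball around `p`: `f` exceeds
`f p` by a fixed margin on an annulus (`p` is the only critical point nearby), while the vertex
nearest to `p` has value close to `f p`, so the minimiser lies well inside the ball and is
minimal within its grid circle.
-/

open Function Metric
open scoped NNReal

section Calculus

variable {E F : Type*} [NormedAddCommGroup E] [NormedSpace ℝ E]
  [NormedAddCommGroup F] [NormedSpace ℝ F]

theorem HasFDerivAt.exists_pos_eventually_mul_norm_sub_le_norm [FiniteDimensional ℝ E]
    {g : E → F} {L : E →L[ℝ] F} {p : E} (hg : HasFDerivAt g L p) (hgp : g p = 0)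
    (hL : Injective L) : ∃ c > 0, ∀ᶠ v in 𝓝 p, c * ‖v - p‖ ≤ ‖g v‖ := by
  obtain ⟨K, hK, hanti⟩ := (L : E →ₗ[ℝ] F).injective_iff_antilipschitz.1 hL
  have hK' : (0 : ℝ) < K := hK
  refine ⟨(2 * (K : ℝ))⁻¹, by positivity, ?_⟩
  filter_upwards [hg.isLittleO.def (c := (2 * (K : ℝ))⁻¹) (by positivity)] with v hv
  rw [hgp, sub_zero] at hv
  have hbound : ‖v - p‖ ≤ K * ‖L (v - p)‖ := L.bound_of_antilipschitz hanti _
  have htri := (norm_le_insert (g v) (L (v - p))).trans (add_le_add_right hv _)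
  have hsplit : (K : ℝ) * (‖g v‖ + (2 * (K : ℝ))⁻¹ * ‖v - p‖) = K * ‖g v‖ + ‖v - p‖ / 2 := by
    field_simp
  rw [inv_mul_le_iff₀ (by positivity)]
  nlinarith [mul_le_mul_of_nonneg_left htri hK'.le]

theorem LipschitzOnWith.norm_sub_sub_fderiv_le {f : E → F} {s : Set E} {M : ℝ≥0}
    (hlip : LipschitzOnWith M (fderiv ℝ f) s) (hs : Convex ℝ s)
    (hf : ∀ x ∈ s, DifferentiableAt ℝ f x) {v w : E} (hv : v ∈ s) (hw : w ∈ s) :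
    ‖f w - f v - fderiv ℝ f v (w - v)‖ ≤ M * ‖w - v‖ ^ 2 := by
  have hbound : ∀ x ∈ s ∩ closedBall v ‖w - v‖, ‖fderiv ℝ f x - fderiv ℝ f v‖ ≤ M * ‖w - v‖ :=
    fun x hx => (hlip.norm_sub_le hx.1 hv).trans <|
      mul_le_mul_of_nonneg_left (mem_closedBall_iff_norm.1 hx.2) M.coe_nonneg
  have := (hs.inter (convex_closedBall v _)).norm_image_sub_le_of_norm_fderiv_le'
    (fun x hx => hf x hx.1) hbound ⟨hv, mem_closedBall_self (norm_nonneg _)⟩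
    ⟨hw, by rw [mem_closedBall_iff_norm]⟩
  linarith

theorem IsMinOn.apply_lt_of_unique_critical {f : E → ℝ} {s : Set E} {p q : E}
    (hmin : IsMinOn f s p) (hs : IsOpen s) (hcrit : ∀ x ∈ s, fderiv ℝ f x = 0 → x = p)
    (hq : q ∈ s) (hqp : q ≠ p) : f p < f q := by
  refine (hmin hq).lt_of_ne fun hpq => hqp (hcrit q hq ?_)
  have hminq : IsMinOn f s q := fun x hx => hpq ▸ hmin hx
  exact (hminq.isLocalMin (hs.mem_nhds hq)).fderiv_eq_zero

theorem IsMinOn.exists_gt_forall_mem_annulus_le [ProperSpace E] {f : E → ℝ} {p : E} {ε c ρ R : ℝ}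
    (hmin : IsMinOn f (closedBall p ε) p) (hf : ContinuousOn f (closedBall p ε)) (hc : 0 < c)
    (hgrad : ∀ v ∈ closedBall p ε, c * ‖v - p‖ ≤ ‖fderiv ℝ f v‖) (hρ : 0 < ρ) (hR : R < ε) :
    ∃ θ, f p < θ ∧ ∀ z ∈ closedBall p R \ ball p ρ, θ ≤ f z := by
  have hcrit : ∀ x ∈ ball p ε, fderiv ℝ f x = 0 → x = p := fun x hx hx0 => by
    have := hgrad x (ball_subset_closedBall hx)
    rw [hx0, norm_zero] at this
    exact sub_eq_zero.1 (norm_le_zero_iff.1 (nonpos_of_mul_nonpos_right this hc))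
  refine ((isCompact_closedBall p R).diff isOpen_ball).exists_forall_le'
    (hf.mono (sdiff_subset.trans (closedBall_subset_closedBall hR.le))) fun z hz => ?_
  exact (hmin.on_subset ball_subset_closedBall).apply_lt_of_unique_critical isOpen_ball hcrit
    (closedBall_subset_ball hR hz.1) fun h => hz.2 (h ▸ mem_ball_self hρ)

end Calculus

theorem ContinuousLinearMap.apply_eq_fst_smul_add_snd_smul {M : Type*} [AddCommGroup M]
    [Module ℝ M] [TopologicalSpace M] (L : ℝ × ℝ →L[ℝ] M) (u : ℝ × ℝ) :
    L u = u.1 • L (1, 0) + u.2 • L (0, 1) := by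
  conv_lhs => rw [show u = u.1 • ((1 : ℝ), (0 : ℝ)) + u.2 • ((0 : ℝ), (1 : ℝ)) by ext <;> simp]
  rw [map_add, map_smul, map_smul]

theorem ContinuousLinearMap.norm_le_abs_apply_add_abs_apply (L : ℝ × ℝ →L[ℝ] ℝ) :
    ‖L‖ ≤ |L (1, 0)| + |L (0, 1)| := by
  refine L.opNorm_le_bound (by positivity) fun u => ?_
  rw [L.apply_eq_fst_smul_add_snd_smul, Real.norm_eq_abs, smul_eq_mul, smul_eq_mul]
  have h1 : |u.1| ≤ ‖u‖ := _root_.norm_fst_le u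
  have h2 : |u.2| ≤ ‖u‖ := _root_.norm_snd_le u
  calc |u.1 * L (1, 0) + u.2 * L (0, 1)| ≤ |u.1| * |L (1, 0)| + |u.2| * |L (0, 1)| := by
        rw [← abs_mul, ← abs_mul]; exact abs_add_le _ _
    _ ≤ (|L (1, 0)| + |L (0, 1)|) * ‖u‖ := by
        nlinarith [abs_nonneg (L (1, 0)), abs_nonneg (L (0, 1))]

theorem ContinuousLinearMap.injective_of_det_ne_zero (H : ℝ × ℝ →L[ℝ] ℝ × ℝ →L[ℝ] ℝ)
    (hdet : H (1, 0) (1, 0) * H (0, 1) (0, 1) - H (1, 0) (0, 1) * H (0, 1) (1, 0) ≠ 0) :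
    Injective H := by
  refine (injective_iff_map_eq_zero H).2 fun u hu => ?_
  have e₁ : H u (1, 0) = 0 := by rw [hu]; rfl
  have e₂ : H u (0, 1) = 0 := by rw [hu]; rfl
  rw [H.apply_eq_fst_smul_add_snd_smul] at e₁ e₂
  simp only [_root_.add_apply, _root_.smul_apply, smul_eq_mul] at e₁ e₂
  set d := H (1, 0) (1, 0) * H (0, 1) (0, 1) - H (1, 0) (0, 1) * H (0, 1) (1, 0)
  -- Cramer's rule
  have h₁ : u.1 * d = 0 := by linear_combination H (0, 1) (0, 1) * e₁ - H (0, 1) (1, 0) * e₂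
  have h₂ : u.2 * d = 0 := by linear_combination H (1, 0) (1, 0) * e₂ - H (1, 0) (0, 1) * e₁
  exact Prod.ext ((mul_eq_zero.1 h₁).resolve_right hdet) ((mul_eq_zero.1 h₂).resolve_right hdet)

theorem pdx_eq_fderiv_apply {f : ℝ × ℝ → ℝ} {q : ℝ × ℝ} (hf : DifferentiableAt ℝ f q) :
    pdx f q = fderiv ℝ f q (1, 0) :=
  (hf.hasFDerivAt.comp_hasDerivAt q.1 ((hasDerivAt_id q.1).prodMk (hasDerivAt_const q.1 q.2))).deriv

theorem pdy_eq_fderiv_apply {f : ℝ × ℝ → ℝ} {q : ℝ × ℝ} (hf : DifferentiableAt ℝ f q) :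
    pdy f q = fderiv ℝ f q (0, 1) :=
  (hf.hasFDerivAt.comp_hasDerivAt q.2 ((hasDerivAt_const q.2 q.1).prodMk (hasDerivAt_id q.2))).deriv

theorem hessDet_eq {f : ℝ × ℝ → ℝ} (hf : ContDiff ℝ 2 f) (p : ℝ × ℝ) :
    hessDet f p =
      fderiv ℝ (fderiv ℝ f) p (1, 0) (1, 0) * fderiv ℝ (fderiv ℝ f) p (0, 1) (0, 1) -
        fderiv ℝ (fderiv ℝ f) p (1, 0) (0, 1) * fderiv ℝ (fderiv ℝ f) p (0, 1) (1, 0) := by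
  have hd : Differentiable ℝ f := hf.differentiable (by norm_num)
  have hH : HasFDerivAt (fderiv ℝ f) (fderiv ℝ (fderiv ℝ f) p) p :=
    ((hf.fderiv_right (m := 1) (by norm_num)).differentiable (by norm_num) p).hasFDerivAt
  have hpartial : ∀ v : ℝ × ℝ, HasFDerivAt (fun q => fderiv ℝ f q v)
      ((fderiv ℝ (fderiv ℝ f) p).flip v) p := fun v => by
    simpa using hH.clm_apply (hasFDerivAt_const v p)
  have hx : pdx f = fun q => fderiv ℝ f q (1, 0) := funext fun q => pdx_eq_fderiv_apply (hd q)
  have hy : pdy f = fun q => fderiv ℝ f q (0, 1) := funext fun q => pdy_eq_fderiv_apply (hd q)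
  rw [hessDet, hx, hy, pdx_eq_fderiv_apply (hpartial _).differentiableAt,
    pdx_eq_fderiv_apply (hpartial _).differentiableAt,
    pdy_eq_fderiv_apply (hpartial _).differentiableAt,
    pdy_eq_fderiv_apply (hpartial _).differentiableAt,
    (hpartial _).fderiv, (hpartial _).fderiv]
  rfl

section Grid

variable {a b : ℝ} {n : ℕ}

theorem cast_natAbs_sub (i l : ℕ) : (((i : ℤ) - l).natAbs : ℝ) = |(i : ℝ) - l| := by
  rw [Nat.cast_natAbs]; push_cast; rfl

theorem gridPt_sub_gridPt (n i j l m : ℕ) :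
    gridPt a b n l m - gridPt a b n i j = (((l : ℝ) - i) * (a / n), ((m : ℝ) - j) * (b / n)) := by
  simp only [gridPt, Prod.mk_sub_mk, Prod.mk.injEq]
  constructor <;> ring

theorem dist_gridPt (ha : 0 ≤ a) (hb : 0 ≤ b) (n i j l m : ℕ) :
    dist (gridPt a b n i j) (gridPt a b n l m) =
      max (|(i : ℝ) - l| * (a / n)) (|(j : ℝ) - m| * (b / n)) := by
  rw [dist_eq_norm, ← neg_sub, norm_neg, gridPt_sub_gridPt, Prod.norm_def, Real.norm_eq_abs,
    Real.norm_eq_abs, abs_mul, abs_mul, abs_sub_comm (l : ℝ), abs_sub_comm (m : ℝ),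
    abs_of_nonneg (by positivity : 0 ≤ a / n), abs_of_nonneg (by positivity : 0 ≤ b / n)]

theorem dist_gridPt_le (ha : 0 ≤ a) (hb : 0 ≤ b) {i j l m r : ℕ}
    (h : max ((i : ℤ) - l).natAbs ((j : ℤ) - m).natAbs ≤ r) :
    dist (gridPt a b n i j) (gridPt a b n l m) ≤ r * max a b / n := by
  have hil : |(i : ℝ) - l| ≤ r := by
    rw [← cast_natAbs_sub]; exact_mod_cast (le_max_left _ _).trans h
  have hjm : |(j : ℝ) - m| ≤ r := by
    rw [← cast_natAbs_sub]; exact_mod_cast (le_max_right _ _).trans h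
  rw [dist_gridPt ha hb, mul_div_assoc]
  exact max_le (by gcongr; exact le_max_left a b) (by gcongr; exact le_max_right a b)

theorem natAbs_sub_le_of_dist_gridPt_le (ha : 0 < a) (hb : 0 < b) (hn : 0 < n) {i j l m : ℕ}
    {d : ℝ} (h : dist (gridPt a b n i j) (gridPt a b n l m) ≤ d / n) :
    max ((i : ℤ) - l).natAbs ((j : ℤ) - m).natAbs ≤ ⌈d / min a b⌉₊ := by
  have hn' : (0 : ℝ) < n := Nat.cast_pos.2 hn
  have key : ∀ {x α : ℝ}, 0 ≤ x → 0 < α → min a b ≤ α → x * (α / n) ≤ d / n →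
      x ≤ ⌈d / min a b⌉₊ := fun {x α} hx hα hmin hxα => by
    rw [← mul_div_assoc, div_le_div_iff_of_pos_right hn'] at hxα
    calc x ≤ d / α := (le_div_iff₀ hα).2 hxα
      _ ≤ d / min a b := div_le_div_of_nonneg_left (by nlinarith) (lt_min ha hb) hmin
      _ ≤ ⌈d / min a b⌉₊ := Nat.le_ceil _
  rw [dist_gridPt ha.le hb.le] at h
  have hil := key (abs_nonneg _) ha (min_le_left a b) ((le_max_left _ _).trans h)
  have hjm := key (abs_nonneg _) hb (min_le_right a b) ((le_max_right _ _).trans h)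
  rw [← cast_natAbs_sub] at hil hjm
  exact max_le (by exact_mod_cast hil) (by exact_mod_cast hjm)

theorem pos_and_lt_of_gridPt_mem_Ioo_prod_Ioo (ha : 0 < a) (hb : 0 < b) (hn : 0 < n) {i j : ℕ}
    (h : gridPt a b n i j ∈ Ioo 0 a ×ˢ Ioo 0 b) : (0 < i ∧ i < n) ∧ (0 < j ∧ j < n) := by
  have hn' : (0 : ℝ) < n := Nat.cast_pos.2 hn
  have key : ∀ {k : ℕ} {α : ℝ}, 0 < α → (k : ℝ) * α / n ∈ Ioo 0 α → 0 < k ∧ k < n :=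
    fun {k α} hα ⟨h0, h1⟩ => by
      rw [div_pos_iff_of_pos_right hn'] at h0
      rw [div_lt_iff₀ hn', mul_comm α] at h1
      exact ⟨by exact_mod_cast pos_of_mul_pos_left h0 hα.le,
        by exact_mod_cast lt_of_mul_lt_mul_right h1 hα.le⟩
  exact ⟨key ha h.1, key hb h.2⟩

theorem exists_abs_nat_mul_div_sub_le {α x : ℝ} (hα : 0 < α) (hn : 0 < n) (hx : x ∈ Icc 0 α) :
    ∃ i ≤ n, |(i : ℝ) * α / n - x| ≤ α / n := by
  have hn' : (0 : ℝ) < n := Nat.cast_pos.2 hn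
  have hy : 0 ≤ x * n / α := by have := hx.1; positivity
  refine ⟨⌊x * n / α⌋₊, Nat.floor_le_of_le ?_, ?_⟩
  · rw [div_le_iff₀ hα, mul_comm]; exact mul_le_mul_of_nonneg_left hx.2 hn'.le
  have h₁ := Nat.floor_le hy
  have h₂ := Nat.lt_floor_add_one (x * n / α)
  rw [le_div_iff₀ hα] at h₁
  rw [div_lt_iff₀ hα] at h₂
  have hlow : ⌊x * n / α⌋₊ * α / n ≤ x := by rw [div_le_iff₀ hn']; linarith
  have hup : x ≤ ⌊x * n / α⌋₊ * α / n + α / n := by rw [← add_div, le_div_iff₀ hn']; linarith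
  rw [abs_le]
  constructor <;> linarith

theorem exists_dist_gridPt_le (ha : 0 < a) (hb : 0 < b) (hn : 0 < n) {p : ℝ × ℝ}
    (hp : p ∈ Icc 0 a ×ˢ Icc 0 b) : ∃ i ≤ n, ∃ j ≤ n, dist (gridPt a b n i j) p ≤ max a b / n := by
  obtain ⟨i, hin, hi⟩ := exists_abs_nat_mul_div_sub_le ha hn hp.1
  obtain ⟨j, hjn, hj⟩ := exists_abs_nat_mul_div_sub_le hb hn hp.2
  refine ⟨i, hin, j, hjn, ?_⟩
  rw [Prod.dist_eq, Real.dist_eq, Real.dist_eq, ← max_div_div_right (Nat.cast_nonneg n)]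
  exact max_le_max hi hj

theorem exists_natAbs_sub_le_one_mul_eq_neg_abs (x : ℝ) {i : ℕ} (hi : 0 < i) (hin : i < n) :
    ∃ k ≤ n, ((i : ℤ) - k).natAbs ≤ 1 ∧ ((k : ℝ) - i) * x = -|x| := by
  rcases le_or_gt 0 x with hx | hx
  · refine ⟨i - 1, by omega, by omega, ?_⟩
    rw [Nat.cast_sub hi, abs_of_nonneg hx]; push_cast; ring
  · refine ⟨i + 1, by omega, by omega, ?_⟩
    rw [abs_of_neg hx]; push_cast; ring

theorem norm_fderiv_le_of_minimalInCircle {f : ℝ × ℝ → ℝ} {M : ℝ≥0} (ha : 0 < a) (hb : 0 < b)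
    (hn : 0 < n) {i j r : ℕ} (hr : 1 ≤ r) (hint : gridPt a b n i j ∈ Ioo 0 a ×ˢ Ioo 0 b)
    (hmin : MinimalInCircle f a b n i j r)
    (htaylor : ∀ w ∈ closedBall (gridPt a b n i j) (max a b / n),
      ‖f w - f (gridPt a b n i j) - fderiv ℝ f (gridPt a b n i j) (w - gridPt a b n i j)‖ ≤
        M * ‖w - gridPt a b n i j‖ ^ 2) :
    ‖fderiv ℝ f (gridPt a b n i j)‖ ≤ M * max a b ^ 2 / (min a b * n) := by
  obtain ⟨⟨hi, hin⟩, hj, hjn⟩ := pos_and_lt_of_gridPt_mem_Ioo_prod_Ioo ha hb hn hint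
  set v := gridPt a b n i j
  set L := fderiv ℝ f v
  -- step to the diagonal neighbour against the sign of each partial derivative
  obtain ⟨k, hkn, hk, hkL⟩ := exists_natAbs_sub_le_one_mul_eq_neg_abs (L (1, 0)) hi hin
  obtain ⟨l, hln, hl, hlL⟩ := exists_natAbs_sub_le_one_mul_eq_neg_abs (L (0, 1)) hj hjn
  have hdist : dist (gridPt a b n k l) v ≤ max a b / n := by
    simpa using dist_gridPt_le (n := n) (r := 1) ha.le hb.le (max_le (by omega) (by omega))
  have hdesc : L (gridPt a b n k l - v) = -(a / n * |L (1, 0)| + b / n * |L (0, 1)|) := by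
    rw [gridPt_sub_gridPt, L.apply_eq_fst_smul_add_snd_smul, smul_eq_mul, smul_eq_mul]
    linear_combination (a / n) * hkL + (b / n) * hlL
  have hle : f v ≤ f (gridPt a b n k l) := hmin k l hkn hln (max_le (by omega) (by omega))
  have hT := htaylor _ hdist
  rw [hdesc, Real.norm_eq_abs, ← dist_eq_norm] at hT
  have hsq : (M : ℝ) * dist (gridPt a b n k l) v ^ 2 ≤ M * (max a b / n) ^ 2 := by gcongr
  have hsum : a / n * |L (1, 0)| + b / n * |L (0, 1)| ≤ M * (max a b / n) ^ 2 := by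
    linarith [le_abs_self (f (gridPt a b n k l) - f v - -(a / n * |L (1, 0)| + b / n * |L (0, 1)|))]
  have hnorm : min a b / n * ‖L‖ ≤ a / n * |L (1, 0)| + b / n * |L (0, 1)| := by
    calc min a b / n * ‖L‖ ≤ min a b / n * (|L (1, 0)| + |L (0, 1)|) :=
          mul_le_mul_of_nonneg_left L.norm_le_abs_apply_add_abs_apply (by positivity)
      _ ≤ a / n * |L (1, 0)| + b / n * |L (0, 1)| := by
          have : min a b / n ≤ a / n := by gcongr; exact min_le_left a b
          have : min a b / n ≤ b / n := by gcongr; exact min_le_right a b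
          nlinarith [abs_nonneg (L (1, 0)), abs_nonneg (L (0, 1))]
  have hfinal := mul_le_mul_of_nonneg_right (hnorm.trans hsum) (sq_nonneg (n : ℝ))
  rw [le_div_iff₀ (by positivity)]
  field_simp at hfinal
  linarith

theorem eq_of_minimalInCircle {f : ℝ × ℝ → ℝ} {i j l m r : ℕ}
    (hinj : ∀ i j l m : ℕ, i ≤ n → j ≤ n → l ≤ n → m ≤ n → (i, j) ≠ (l, m) →
      f (gridPt a b n i j) ≠ f (gridPt a b n l m))
    (hi : i ≤ n) (hj : j ≤ n) (hl : l ≤ n) (hm : m ≤ n)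
    (hij : MinimalInCircle f a b n i j r) (hlm : MinimalInCircle f a b n l m r)
    (hclose : max ((i : ℤ) - l).natAbs ((j : ℤ) - m).natAbs ≤ r) : (l, m) = (i, j) := by
  by_contra hne
  exact hinj l m i j hl hm hi hj hne <|
    le_antisymm (hlm i j hi hj (by omega)) (hij l m hl hm hclose)

theorem exists_minimalInCircle_mem_ball {f : ℝ × ℝ → ℝ} {p : ℝ × ℝ} {ρ R : ℝ} {r i₀ j₀ : ℕ}
    (ha : 0 ≤ a) (hb : 0 ≤ b) (hR : ρ + r * max a b / n ≤ R) (hi₀ : i₀ ≤ n) (hj₀ : j₀ ≤ n)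
    (h₀ : gridPt a b n i₀ j₀ ∈ ball p ρ)
    (hlt : ∀ z ∈ closedBall p R \ ball p ρ, f (gridPt a b n i₀ j₀) < f z) :
    ∃ ij : ℕ × ℕ, ij.1 ≤ n ∧ ij.2 ≤ n ∧ gridPt a b n ij.1 ij.2 ∈ ball p ρ ∧
      MinimalInCircle f a b n ij.1 ij.2 r := by
  classical
  set T := (Finset.range (n + 1) ×ˢ Finset.range (n + 1)).filter
    fun ij => gridPt a b n ij.1 ij.2 ∈ closedBall p R
  have hT : ∀ {ij : ℕ × ℕ},
      ij ∈ T ↔ ij.1 ≤ n ∧ ij.2 ≤ n ∧ gridPt a b n ij.1 ij.2 ∈ closedBall p R := by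
    simp [T, and_assoc]
  have hρR : ρ ≤ R := by
    have : 0 ≤ r * max a b / n := by positivity
    linarith
  have h₀T : (i₀, j₀) ∈ T :=
    hT.2 ⟨hi₀, hj₀, closedBall_subset_closedBall hρR (ball_subset_closedBall h₀)⟩
  obtain ⟨⟨i, j⟩, hijT, hijmin⟩ :=
    T.exists_min_image (fun ij => f (gridPt a b n ij.1 ij.2)) ⟨_, h₀T⟩
  obtain ⟨hi, hj, hijR⟩ := hT.1 hijT
  have hijρ : gridPt a b n i j ∈ ball p ρ := by
    by_contra h
    exact (hijmin _ h₀T).not_gt (hlt _ ⟨hijR, h⟩)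
  refine ⟨(i, j), hi, hj, hijρ, fun l m hl hm hlm => hijmin (l, m) (hT.2 ⟨hl, hm, ?_⟩)⟩
  calc dist (gridPt a b n l m) p
        ≤ dist (gridPt a b n i j) (gridPt a b n l m) + dist (gridPt a b n i j) p :=
          dist_triangle_left _ _ _
    _ ≤ r * max a b / n + ρ := add_le_add (dist_gridPt_le ha hb hlm) (le_of_lt hijρ)
    _ ≤ R := by linarith

theorem dist_gridPt_le_of_minimalInCircle {f : ℝ × ℝ → ℝ} {p : ℝ × ℝ} {ε c : ℝ} {M : ℝ≥0}
    (ha : 0 < a) (hb : 0 < b) (hn : 0 < n) (hc : 0 < c)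
    (hint : closedBall p ε ⊆ Ioo 0 a ×ˢ Ioo 0 b)
    (hgrad : ∀ v ∈ closedBall p ε, c * ‖v - p‖ ≤ ‖fderiv ℝ f v‖)
    (htaylor : ∀ v ∈ closedBall p ε, ∀ w ∈ closedBall p ε,
      ‖f w - f v - fderiv ℝ f v (w - v)‖ ≤ M * ‖w - v‖ ^ 2)
    (hstep : max a b / n ≤ ε / 2) {i j r : ℕ} (hr : 1 ≤ r)
    (hv : gridPt a b n i j ∈ closedBall p (ε / 2)) (hmin : MinimalInCircle f a b n i j r) :
    dist (gridPt a b n i j) p ≤ M * max a b ^ 2 / (c * min a b) / n := by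
  have hε : 0 ≤ ε / 2 := nonempty_closedBall.1 ⟨_, hv⟩
  have hvε := closedBall_subset_closedBall (by linarith : ε / 2 ≤ ε) hv
  have hD := norm_fderiv_le_of_minimalInCircle ha hb hn hr (hint hvε) hmin
    fun w hw => htaylor _ hvε w <| by
      rw [mem_closedBall] at hv hw ⊢
      linarith [dist_triangle w (gridPt a b n i j) p]
  rw [dist_eq_norm]
  calc ‖gridPt a b n i j - p‖ ≤ ‖fderiv ℝ f (gridPt a b n i j)‖ / c :=
        (le_div_iff₀' hc).2 (hgrad _ hvε)
    _ ≤ M * max a b ^ 2 / (min a b * n) / c := by gcongr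
    _ = M * max a b ^ 2 / (c * min a b) / n := by ring

end Grid

theorem exists_radius_eventually_existsUnique_minimalInCircle {a b ε c : ℝ} {M : ℝ≥0}
    {f : ℝ × ℝ → ℝ} {p : ℝ × ℝ} (ha : 0 < a) (hb : 0 < b) (hf : Continuous f) (hε : 0 < ε)
    (hc : 0 < c) (hint : closedBall p ε ⊆ Ioo 0 a ×ˢ Ioo 0 b) (hmin : IsMinOn f (closedBall p ε) p)
    (hgrad : ∀ v ∈ closedBall p ε, c * ‖v - p‖ ≤ ‖fderiv ℝ f v‖)
    (htaylor : ∀ v ∈ closedBall p ε, ∀ w ∈ closedBall p ε,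
      ‖f w - f v - fderiv ℝ f v (w - v)‖ ≤ M * ‖w - v‖ ^ 2)
    (hinj : ∀ n i j l m : ℕ, 0 < n → i ≤ n → j ≤ n → l ≤ n → m ≤ n →
      (i, j) ≠ (l, m) → f (gridPt a b n i j) ≠ f (gridPt a b n l m)) :
    ∃ r : ℕ, ∀ᶠ n in atTop, ∃! ij : ℕ × ℕ, ij.1 ≤ n ∧ ij.2 ≤ n ∧
      gridPt a b n ij.1 ij.2 ∈ ball p (ε / 4) ∧ MinimalInCircle f a b n ij.1 ij.2 r := by
  obtain ⟨θ, hpθ, hθ⟩ := hmin.exists_gt_forall_mem_annulus_le hf.continuousOn hc hgrad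
    (by positivity : 0 < ε / 4) (by linarith : ε / 2 < ε)
  obtain ⟨σ, hσ, hσθ⟩ := Metric.eventually_nhds_iff.1 (hf.continuousAt.eventually (gt_mem_nhds hpθ))
  set K := M * max a b ^ 2 / (c * min a b)
  set r := max 1 ⌈2 * K / min a b⌉₊
  refine ⟨r, ?_⟩
  filter_upwards [eventually_gt_atTop 0,
    (tendsto_const_div_atTop_nhds_zero_nat (max a b)).eventually
      (gt_mem_nhds (lt_min hσ (by positivity : 0 < ε / 4))),
    (tendsto_const_div_atTop_nhds_zero_nat (r * max a b)).eventually
      (gt_mem_nhds (by positivity : 0 < ε / 4))] with n hn hstep hcircle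
  have hstepσ := hstep.trans_le (min_le_left _ _)
  have hstepε := hstep.trans_le (min_le_right _ _)
  have hnear : ∀ {i j : ℕ}, gridPt a b n i j ∈ closedBall p (ε / 2) →
      MinimalInCircle f a b n i j r → dist (gridPt a b n i j) p ≤ K / n :=
    dist_gridPt_le_of_minimalInCircle ha hb hn hc hint hgrad htaylor (by linarith) (le_max_left _ _)
  obtain ⟨i₀, hi₀, j₀, hj₀, h₀⟩ :=
    exists_dist_gridPt_le ha hb hn
      (prod_mono Ioo_subset_Icc_self Ioo_subset_Icc_self (hint (mem_closedBall_self hε.le)))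
  obtain ⟨⟨i, j⟩, hi, hj, hij, hijmin⟩ :=
    exists_minimalInCircle_mem_ball (ρ := ε / 4) (R := ε / 2) (r := r) ha.le hb.le (by linarith)
      hi₀ hj₀ (h₀.trans_lt hstepε) fun z hz => (hσθ (h₀.trans_lt hstepσ)).trans_le (hθ z hz)
  refine ⟨(i, j), ⟨hi, hj, hij, hijmin⟩, fun ⟨l, m⟩ ⟨hl, hm, hlm, hlmmin⟩ => ?_⟩
  have hsub : ball p (ε / 4) ⊆ closedBall p (ε / 2) :=
    ball_subset_closedBall.trans (closedBall_subset_closedBall (by linarith))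
  have hclose : dist (gridPt a b n i j) (gridPt a b n l m) ≤ 2 * K / n := by
    calc _ ≤ dist (gridPt a b n i j) p + dist (gridPt a b n l m) p := dist_triangle_right _ _ _
      _ ≤ K / n + K / n := add_le_add (hnear (hsub hij) hijmin) (hnear (hsub hlm) hlmmin)
      _ = 2 * K / n := by ring
  exact eq_of_minimalInCircle (fun i j l m => hinj n i j l m hn) hi hj hl hm hijmin hlmmin
    ((natAbs_sub_le_of_dist_gridPt_le ha hb hn hclose).trans (le_max_right _ _))

theorem unique_minimal_grid_vertex_near_local_minimum_general
    (a b : ℝ) (ha : 0 < a) (hb : 0 < b) (f : ℝ × ℝ → ℝ)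
    (hf : ContDiff ℝ 3 f)
    (hhess : ∀ p ∈ Icc (0 : ℝ) a ×ˢ Icc (0 : ℝ) b, IsStationaryPt f p → hessDet f p ≠ 0)
    (hnondeg : ∀ n i j l m : ℕ, 0 < n → i ≤ n → j ≤ n → l ≤ n → m ≤ n →
      (i, j) ≠ (l, m) → f (gridPt a b n i j) ≠ f (gridPt a b n l m))
    (p : ℝ × ℝ) (hp : p ∈ interior (Icc (0 : ℝ) a ×ˢ Icc (0 : ℝ) b))
    (hloc : IsLocalMin f p) :
    ∃ U ∈ nhds p, ∃ r : ℕ, ∃ N : ℕ, ∀ n : ℕ, N ≤ n →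
      ∃! ij : ℕ × ℕ, ij.1 ≤ n ∧ ij.2 ≤ n ∧ gridPt a b n ij.1 ij.2 ∈ U ∧
        MinimalInCircle f a b n ij.1 ij.2 r := by
  have hf2 : ContDiff ℝ 2 f := hf.of_le (by norm_num)
  have hDf : ContDiff ℝ 1 (fderiv ℝ f) := hf2.fderiv_right le_rfl
  have hcrit : fderiv ℝ f p = 0 := hloc.fderiv_eq_zero
  have hH : Injective (fderiv ℝ (fderiv ℝ f) p) := ContinuousLinearMap.injective_of_det_ne_zero _
    (hessDet_eq hf2 p ▸ hhess p (interior_subset hp) hcrit)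
  obtain ⟨c, hc, hgrad⟩ := (hDf.differentiable one_ne_zero p).hasFDerivAt
    |>.exists_pos_eventually_mul_norm_sub_le_norm hcrit hH
  obtain ⟨M, t, ht, hlip⟩ := hDf.contDiffAt.exists_lipschitzOnWith
  rw [interior_prod_eq, interior_Icc, interior_Icc] at hp
  obtain ⟨ε, hε, hball⟩ := nhds_basis_closedBall.mem_iff.1
    (inter_mem (inter_mem (inter_mem ((isOpen_Ioo.prod isOpen_Ioo).mem_nhds hp) hloc) hgrad) ht)
  obtain ⟨r, hr⟩ := exists_radius_eventually_existsUnique_minimalInCircle ha hb hf.continuous hε hc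
    (fun v hv => (hball hv).1.1.1) (isMinOn_iff.2 fun v hv => (hball hv).1.1.2)
    (fun v hv => (hball hv).1.2)
    (fun v hv w hw => (hlip.mono fun x hx => (hball hx).2).norm_sub_sub_fderiv_le
      (convex_closedBall p ε) (fun x _ => hf2.differentiable two_ne_zero x) hv hw) hnondeg
  obtain ⟨N, hN⟩ := eventually_atTop.1 hr
  exact ⟨ball p (ε / 4), ball_mem_nhds p (by positivity), r, N, hN⟩

/-- If `p ∈ int D` is a local minimum of `f`, then `p` has a
neighbourhood `U` and there is a sufficiently large radius `r` such that for every
sufficiently large `n` there is exactly one grid vertex in `U` which is minimal within its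
grid circle of radius `r`. -/
theorem unique_minimal_grid_vertex_near_local_minimum
    (a b : ℝ) (ha : 0 < a) (hb : 0 < b) (f : ℝ × ℝ → ℝ)
    (hf : ContDiff ℝ 3 f)
    (hfin : {p ∈ Icc (0 : ℝ) a ×ˢ Icc (0 : ℝ) b | IsStationaryPt f p}.Finite)
    (hinterior : {p ∈ Icc (0 : ℝ) a ×ˢ Icc (0 : ℝ) b | IsStationaryPt f p} ⊆
      interior (Icc (0 : ℝ) a ×ˢ Icc (0 : ℝ) b))
    (hhess : ∀ p ∈ Icc (0 : ℝ) a ×ˢ Icc (0 : ℝ) b, IsStationaryPt f p → hessDet f p ≠ 0)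
    (hnondeg : ∀ n i j l m : ℕ, 0 < n → i ≤ n → j ≤ n → l ≤ n → m ≤ n →
      (i, j) ≠ (l, m) → f (gridPt a b n i j) ≠ f (gridPt a b n l m))
    (p : ℝ × ℝ) (hp : p ∈ interior (Icc (0 : ℝ) a ×ˢ Icc (0 : ℝ) b))
    (hloc : IsLocalMin f p) :
    ∃ U ∈ nhds p, ∃ r : ℕ, ∃ N : ℕ, ∀ n : ℕ, N ≤ n →
      ∃! ij : ℕ × ℕ, ij.1 ≤ n ∧ ij.2 ≤ n ∧ gridPt a b n ij.1 ij.2 ∈ U ∧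
        MinimalInCircle f a b n ij.1 ij.2 r :=
  unique_minimal_grid_vertex_near_local_minimum_general a b ha hb f hf hhess hnondeg p hp hloc
end
end
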